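/- arXiv:0909.2269 — 4 statements merged into one kernel-verified Lean document; each statement's English description precedes it below -/
import Mathlib

section
/- Let τ₁, τ₂ > 0 with τ₂/τ₁ irrational, and let τ_spr > 0 with τ_spr < τ₁. Then there exist positive integers m, n with |m·τ₁ − n·τ₂| < τ_spr, and among all such pairs there is one minimizing m + n; let D = m + n for this minimizing pair. Moreover, for any positive integers p, q with p + q > D and |p·τ₁ − q·τ₂| < τ₂, we have p ≥ m and q ≥ n. -/
/-- Existence of a pair. -/
lemma stmt_5_exists (τ₁ τ₂ τspr : ℝ) (hτ₁ : 0 < τ₁) (hτ₂ : 0 < τ₂)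
    (hirr : Irrational (τ₂ / τ₁)) (hspr : 0 < τspr) :
    ∃ m n : ℕ, 0 < m ∧ 0 < n ∧ |(m : ℝ) * τ₁ - (n : ℝ) * τ₂| < τspr := by
  set S : AddSubgroup ℝ := AddSubgroup.closure {τ₁, τ₂} with hS
  have hdense : Dense (S : Set ℝ) := by
    rcases S.dense_or_cyclic with h | ⟨a, ha⟩
    · exact h
    · exfalso
      have h1 : τ₁ ∈ S := AddSubgroup.subset_closure (by simp)
      have h2 : τ₂ ∈ S := AddSubgroup.subset_closure (by simp)
      rw [ha, AddSubgroup.mem_closure_singleton] at h1 h2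
      obtain ⟨k, hk⟩ := h1
      obtain ⟨l, hl⟩ := h2
      have hk0 : (k : ℝ) ≠ 0 := by
        rintro h
        rw [zsmul_eq_mul, h, zero_mul] at hk
        exact hτ₁.ne hk
      have : τ₂ / τ₁ = (l : ℝ) / (k : ℝ) := by
        rw [← hk, ← hl, zsmul_eq_mul, zsmul_eq_mul]
        have ha0 : a ≠ 0 := by
          rintro rfl
          rw [zsmul_eq_mul, mul_zero] at hk
          exact hτ₁.ne hk
        field_simp
      exact hirr ⟨(l : ℚ) / (k : ℚ), by push_cast [this]; ring⟩
  -- pick a small positive element of S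
  set ε : ℝ := min τspr (min τ₁ τ₂) with hε
  have hε0 : 0 < ε := lt_min hspr (lt_min hτ₁ hτ₂)
  obtain ⟨g, hgS, hg0, hgε⟩ : ∃ g ∈ S, 0 < g ∧ g < ε := by
    rcases hdense.exists_between hε0 with ⟨g, hgS, hg0, hgε⟩
    exact ⟨g, hgS, hg0, hgε⟩
  rw [hS, AddSubgroup.mem_closure_pair] at hgS
  obtain ⟨a, b, hab⟩ := hgS
  rw [zsmul_eq_mul, zsmul_eq_mul] at hab
  have hgspr : g < τspr := lt_of_lt_of_le hgε (min_le_left _ _)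
  have hgτ₁ : g < τ₁ := lt_of_lt_of_le hgε (le_trans (min_le_right _ _) (min_le_left _ _))
  have hgτ₂ : g < τ₂ := lt_of_lt_of_le hgε (le_trans (min_le_right _ _) (min_le_right _ _))
  rcases lt_trichotomy a 0 with haneg | ha0 | hapos
  · -- a < 0 forces b > 0
    have ha' : (a : ℝ) ≤ -1 := by exact_mod_cast (show a ≤ -1 by omega)
    have hb : 0 < b := by
      by_contra hb
      push_neg at hb
      have hb' : (b : ℝ) ≤ 0 := by exact_mod_cast hb
      nlinarith
    have hma : (((-a).toNat : ℕ) : ℝ) = -(a : ℝ) := by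
      rw [show ((((-a).toNat : ℕ)) : ℝ) = ((((-a).toNat : ℕ) : ℤ) : ℝ) by push_cast; ring,
        Int.toNat_of_nonneg (by omega)]
      push_cast; ring
    have hnb : ((b.toNat : ℕ) : ℝ) = (b : ℝ) := by
      rw [show (((b.toNat : ℕ)) : ℝ) = ((((b.toNat : ℕ)) : ℤ) : ℝ) by push_cast; ring,
        Int.toNat_of_nonneg (by omega)]
    refine ⟨(-a).toNat, b.toNat, by omega, by omega, ?_⟩
    have heq : (((-a).toNat : ℕ) : ℝ) * τ₁ - ((b.toNat : ℕ) : ℝ) * τ₂ = -g := by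
      rw [hma, hnb, ← hab]; ring
    rw [heq, abs_neg, abs_of_pos hg0]
    exact hgspr
  · -- a = 0: impossible since 0 < g < τ₂
    exfalso
    rw [ha0] at hab
    simp at hab
    have hb : 0 < b := by
      by_contra hb
      push_neg at hb
      have : (b : ℝ) ≤ 0 := by exact_mod_cast hb
      nlinarith
    have : (1 : ℝ) ≤ (b : ℝ) := by exact_mod_cast hb
    nlinarith
  · -- a > 0 forces b < 0
    have ha' : (1 : ℝ) ≤ (a : ℝ) := by exact_mod_cast hapos
    have hb : b < 0 := by
      by_contra hb
      push_neg at hb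
      have hb' : (0 : ℝ) ≤ (b : ℝ) := by exact_mod_cast hb
      nlinarith
    have hma : ((a.toNat : ℕ) : ℝ) = (a : ℝ) := by
      rw [show (((a.toNat : ℕ)) : ℝ) = ((((a.toNat : ℕ)) : ℤ) : ℝ) by push_cast; ring,
        Int.toNat_of_nonneg (by omega)]
    have hnb : (((-b).toNat : ℕ) : ℝ) = -(b : ℝ) := by
      rw [show ((((-b).toNat : ℕ)) : ℝ) = (((((-b).toNat : ℕ)) : ℤ) : ℝ) by push_cast; ring,
        Int.toNat_of_nonneg (by omega)]
      push_cast; ring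
    refine ⟨a.toNat, (-b).toNat, by omega, by omega, ?_⟩
    have heq : ((a.toNat : ℕ) : ℝ) * τ₁ - (((-b).toNat : ℕ) : ℝ) * τ₂ = g := by
      rw [hma, hnb, ← hab]; ring
    rw [heq, abs_of_pos hg0]
    exact hgspr

/-- Existence of a minimal rejection pair `(m, n)` with `|m τ₁ - n τ₂| < τ_spr`
minimizing `m + n`, and the step in the paper's proof: any positive `(p, q)` with
`p + q > m + n` and `|p τ₁ - q τ₂| < τ₂` satisfies `p ≥ m` and `q ≥ n`. -/
theorem stmt_5 (τ₁ τ₂ τspr : ℝ) (hτ₁ : 0 < τ₁) (hτ₂ : 0 < τ₂)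
    (hirr : Irrational (τ₂ / τ₁)) (hspr : 0 < τspr) (hspr₁ : τspr < τ₁) :
    ∃ m n : ℕ, 0 < m ∧ 0 < n ∧ |(m : ℝ) * τ₁ - (n : ℝ) * τ₂| < τspr ∧
      (∀ m' n' : ℕ, 0 < m' → 0 < n' → |(m' : ℝ) * τ₁ - (n' : ℝ) * τ₂| < τspr →
        m + n ≤ m' + n') ∧
      (∀ p q : ℕ, 0 < p → 0 < q → m + n < p + q →
        |(p : ℝ) * τ₁ - (q : ℝ) * τ₂| < τ₂ → m ≤ p ∧ n ≤ q) := by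
  obtain ⟨m₀, n₀, hm₀, hn₀, habs₀⟩ := stmt_5_exists τ₁ τ₂ τspr hτ₁ hτ₂ hirr hspr
  set P : ℕ → Prop := fun k =>
    ∃ m n : ℕ, m + n = k ∧ 0 < m ∧ 0 < n ∧ |(m : ℝ) * τ₁ - (n : ℝ) * τ₂| < τspr with hP
  have hPex : ∃ k, P k := ⟨m₀ + n₀, m₀, n₀, rfl, hm₀, hn₀, habs₀⟩
  classical
  obtain ⟨m, n, hmn, hm, hn, habs⟩ := Nat.find_spec hPex
  refine ⟨m, n, hm, hn, habs, ?_, ?_⟩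
  · intro m' n' hm' hn' habs'
    rw [hmn]
    exact Nat.find_min' hPex ⟨m', n', rfl, hm', hn', habs'⟩
  · intro p q hp hq hsum habspq
    rw [abs_lt] at habs habspq
    constructor
    · by_contra hpm
      push_neg at hpm
      -- p < m, so q ≥ n + (m - p) + 1
      have h1 : (p : ℝ) + 1 ≤ (m : ℝ) := by exact_mod_cast hpm
      have h2 : (m : ℝ) + n + 1 ≤ (p : ℝ) + q := by exact_mod_cast hsum
      nlinarith [habs.1, habs.2, habspq.1, habspq.2,
        mul_nonneg (by linarith : (0:ℝ) ≤ (q:ℝ) - n - 2) hτ₂.le,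
        mul_nonneg (by linarith : (0:ℝ) ≤ (m:ℝ) - p - 1) hτ₁.le]
    · by_contra hqn
      push_neg at hqn
      have h1 : (q : ℝ) + 1 ≤ (n : ℝ) := by exact_mod_cast hqn
      have h2 : (m : ℝ) + n + 1 ≤ (p : ℝ) + q := by exact_mod_cast hsum
      nlinarith [habs.1, habs.2, habspq.1, habspq.2]
end

section
/- Let m, n be positive integers, and consider two monotone lattice paths in ℕ² starting from (0,0), where each step increments either the first or the second coordinate by 1; write the points of the first path as (i_0, j_0) = (0,0), (i_1, j_1), ..., (i_R, j_R) and those of the second as (k_0, ℓ_0) = (0,0), (k_1, ℓ_1), ..., (k_S, ℓ_S). If i_R − k_S ≥ m and ℓ_S − j_R ≥ n, then there exist indices r, s with (k_s − i_r, ℓ_s − j_r) = (−m, n). -/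
/-- Discrete intermediate value theorem for two monotone lattice paths from the
origin: if the final relative displacement satisfies `i R - k S ≥ m` and
`ℓ S - j R ≥ n`, then some pair of intermediate points realizes the relative
displacement `(k s - i r, ℓ s - j r) = (-m, n)`. -/
theorem stmt_6 (m n : ℕ) (hm : 0 < m) (hn : 0 < n)
    (i j k ℓ : ℕ → ℕ) (R S : ℕ)
    (h0 : i 0 = 0 ∧ j 0 = 0 ∧ k 0 = 0 ∧ ℓ 0 = 0)
    (hstep1 : ∀ r < R, (i (r + 1) = i r + 1 ∧ j (r + 1) = j r) ∨
      (i (r + 1) = i r ∧ j (r + 1) = j r + 1))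
    (hstep2 : ∀ s < S, (k (s + 1) = k s + 1 ∧ ℓ (s + 1) = ℓ s) ∨
      (k (s + 1) = k s ∧ ℓ (s + 1) = ℓ s + 1))
    (hfin : (i R : ℤ) - k S ≥ m ∧ (ℓ S : ℤ) - j R ≥ n) :
    ∃ r ≤ R, ∃ s ≤ S, (k s : ℤ) - i r = -(m : ℤ) ∧ (ℓ s : ℤ) - j r = n := by
  classical
  obtain ⟨hi0, hj0, hk0, hl0⟩ := h0
  obtain ⟨hfin1, hfin2⟩ := hfin
  -- step bounds
  have istep : ∀ r < R, i (r + 1) ≤ i r + 1 ∧ i r ≤ i (r + 1) ∧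
      j (r + 1) ≤ j r + 1 ∧ j r ≤ j (r + 1) := by
    intro r hr; rcases hstep1 r hr with ⟨h1, h2⟩ | ⟨h1, h2⟩ <;> omega
  have kstep : ∀ s < S, k (s + 1) ≤ k s + 1 ∧ k s ≤ k (s + 1) ∧
      ℓ (s + 1) ≤ ℓ s + 1 ∧ ℓ s ≤ ℓ (s + 1) := by
    intro s hs; rcases hstep2 s hs with ⟨h1, h2⟩ | ⟨h1, h2⟩ <;> omega
  -- monotonicity up to R (resp. S)
  have imono : ∀ a b, a ≤ b → b ≤ R → i a ≤ i b ∧ j a ≤ j b := by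
    intro a b hab hbR
    induction b with
    | zero =>
      obtain rfl : a = 0 := Nat.le_zero.mp hab
      exact ⟨le_rfl, le_rfl⟩
    | succ b ih =>
      rcases Nat.eq_or_lt_of_le hab with h | h
      · subst h; exact ⟨le_rfl, le_rfl⟩
      · have h1 := ih (by omega) (by omega)
        have h2 := istep b (by omega)
        omega
  have kmono : ∀ a b, a ≤ b → b ≤ S → k a ≤ k b ∧ ℓ a ≤ ℓ b := by
    intro a b hab hbS
    induction b with
    | zero =>
      obtain rfl : a = 0 := Nat.le_zero.mp hab
      exact ⟨le_rfl, le_rfl⟩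
    | succ b ih =>
      rcases Nat.eq_or_lt_of_le hab with h | h
      · subst h; exact ⟨le_rfl, le_rfl⟩
      · have h1 := ih (by omega) (by omega)
        have h2 := kstep b (by omega)
        omega
  have hiR : k S + m ≤ i R := by omega
  -- for each s, the least r with k s + m ≤ i r
  have hex : ∀ s, ∃ r, r ≤ R ∧ k (min s S) + m ≤ i r := by
    intro s
    refine ⟨R, le_rfl, ?_⟩
    have := kmono (min s S) S (min_le_right _ _) le_rfl
    omega
  set rf : ℕ → ℕ := fun s => Nat.find (hex s) with hrf
  have hrfR : ∀ s, rf s ≤ R := fun s => (Nat.find_spec (hex s)).1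
  have hrfspec : ∀ s ≤ S, k s + m ≤ i (rf s) := by
    intro s hs
    have h1 : k (min s S) + m ≤ i (rf s) := (Nat.find_spec (hex s)).2
    have h2 : k (min s S) = k s := by rw [min_eq_left hs]
    omega
  have hrfmin : ∀ s ≤ S, ∀ r' < rf s, i r' < k s + m := by
    intro s hs r' hr'
    have h1 := Nat.find_min (hex s) hr'
    have h2 : k (min s S) = k s := by rw [min_eq_left hs]
    have hr'R : r' ≤ R := le_trans (le_of_lt hr') (hrfR s)
    omega
  -- exact hit: i (rf s) = k s + m
  have hrfeq : ∀ s ≤ S, i (rf s) = k s + m := by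
    intro s hs
    have h1 := hrfspec s hs
    have hpos : rf s ≠ 0 := by
      intro h
      rw [h, hi0] at h1
      omega
    obtain ⟨r', hr'⟩ : ∃ r', rf s = r' + 1 := ⟨rf s - 1, by omega⟩
    have h2 := hrfmin s hs r' (by omega)
    have h3 := istep r' (by have := hrfR s; omega)
    rw [hr'] at h1 ⊢
    omega
  -- rf is monotone in steps
  have hrfmono : ∀ s < S, rf s ≤ rf (s + 1) := by
    intro s hs
    apply Nat.find_min'
    refine ⟨hrfR (s + 1), ?_⟩
    have h2 : k (min s S) = k s := by rw [min_eq_left (by omega : s ≤ S)]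
    have h1 := hrfspec (s + 1) (by omega)
    have h3 := kstep s hs
    omega
  -- discrete IVT on g s = ℓ s - j (rf s)
  have hgex : ∃ s, s ≤ S ∧ (n : ℤ) ≤ (ℓ s : ℤ) - j (rf s) := by
    refine ⟨S, le_rfl, ?_⟩
    have := (imono (rf S) R (hrfR S) le_rfl).2
    omega
  set s₁ := Nat.find hgex with hs₁def
  have hs₁S : s₁ ≤ S := (Nat.find_spec hgex).1
  have hs₁ge : (n : ℤ) ≤ (ℓ s₁ : ℤ) - j (rf s₁) := (Nat.find_spec hgex).2
  have hs1pos : s₁ ≠ 0 := by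
    intro h
    have hl : ℓ s₁ = 0 := by rw [h, hl0]
    omega
  obtain ⟨s', hs'⟩ : ∃ s', s₁ = s' + 1 := ⟨s₁ - 1, by omega⟩
  have hmin' : ¬ (s' ≤ S ∧ (n : ℤ) ≤ (ℓ s' : ℤ) - j (rf s')) :=
    Nat.find_min hgex (show s' < s₁ by omega)
  have hs'S : s' ≤ S := by omega
  have hs'lt : (ℓ s' : ℤ) - j (rf s') < n := by
    by_contra h
    exact hmin' ⟨hs'S, by omega⟩
  have hjm : j (rf s') ≤ j (rf s₁) := by
    rw [hs']
    exact (imono (rf s') (rf (s' + 1)) (hrfmono s' (by omega)) (hrfR _)).2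
  have hlstep : ℓ s₁ ≤ ℓ s' + 1 := by
    rw [hs']; exact (kstep s' (by omega)).2.2.1
  have hgeq : (ℓ s₁ : ℤ) - j (rf s₁) = n := by omega
  refine ⟨rf s₁, hrfR s₁, s₁, hs₁S, ?_, hgeq⟩
  have := hrfeq s₁ hs₁S
  omega
end

section
/- In the single-copier model with degradation, the pulse-width variables satisfy the reduction: if w_{i} and v_{i} obey w_{i+1} = w_i + g(τ − v_i) − g(τ − w_i), v_{i+1} = v_i + g(τ − w_{i+1}) − g(τ − v_i), together with the constraint g(τ − w_i) − w_i = v_i holding at step i, then the constraint also holds at step i+1 (i.e., g(τ − w_{i+1}) − w_{i+1} = v_{i+1}), and v evolves by the one-dimensional map v_{i+1} = v_i + g(τ + v_i − g(τ − v_i)) − g(τ − v_i). -/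
/-- Reduction of the two-dimensional pulse-width map with degradation to a 1D
map: the constraint `g (τ - w) - w = v` is invariant under the evolution, and
on the constraint manifold `v` evolves by
`v' = v + g (τ + v - g (τ - v)) - g (τ - v)`. -/
theorem stmt_14 (g : ℝ → ℝ) (τ : ℝ) (w v w' v' : ℝ)
    (hw' : w' = w + g (τ - v) - g (τ - w))
    (hv' : v' = v + g (τ - w') - g (τ - v))
    (hconstr : g (τ - w) - w = v) :
    g (τ - w') - w' = v' ∧ v' = v + g (τ + v - g (τ - v)) - g (τ - v) := by
  have hw'_on_constraint : w' = g (τ - v) - v := by linarith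
  refine ⟨by linarith, ?_⟩
  rw [hv', hw'_on_constraint, sub_sub_eq_add_sub]
end

section
/- Let g(x) = τ + a + b·(x − c)·exp(−x/A) with τ = 1.3, a = 0.26, b = 13.0, c = 0.02, A = 0.18, and define h(v) = v + g(τ + v − g(τ − v)) − g(τ − v). Then h is not monotone on the interval of physically relevant v (there exist v₁ < v₂ in (0.4, 1.2) with h(v₁) > h(v₂)), i.e., the 1D pulse-width map has a fold, a necessary condition for chaotic dynamics. -/
/-!
Take `v₁ = 0.7` and `v₂ = 1.0`. Every quantity in `h` is enclosed in an interval: the exponentials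
through `(1 - t/n)^n ≤ exp (-t) ≤ (1 + t/n)^(-n)` with `n = 128`, and `g` on an interval
`[lo, hi]` with `lo ≥ c` through the endpoint bounds `(lo - c) exp (-hi/A) ≤ (x - c) exp (-x/A) ≤
(hi - c) exp (-lo/A)`. The enclosures give `h 0.7 - h 1.0 ≥ 0.3`.
-/

/-- The degradation function used in the paper's chaotic copier. -/
noncomputable def gdeg (x : ℝ) : ℝ :=
  1.3 + 0.26 + 13.0 * (x - 0.02) * Real.exp (-x / 0.18)

/-- The induced 1D pulse-width map. -/
noncomputable def hmap (v : ℝ) : ℝ :=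
  v + gdeg (1.3 + v - gdeg (1.3 - v)) - gdeg (1.3 - v)

open Real Set

lemma Real.exp_neg_le_inv_one_add_div_pow {t : ℝ} (ht : 0 ≤ t) (n : ℕ) :
    exp (-t) ≤ ((1 + t / n) ^ n)⁻¹ := by
  have hpow : (1 + t / n) ^ n ≤ exp t := by
    simpa [sub_eq_add_neg, neg_div] using
      one_sub_div_pow_le_exp_neg (n := n) (t := -t) (by linarith [n.cast_nonneg (α := ℝ)])
  rw [exp_neg]
  exact inv_anti₀ (by positivity) hpow

lemma Real.exp_neg_mem_Icc_of_le {t : ℝ} {n : ℕ} (ht : 0 ≤ t) (htn : t ≤ n) :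
    exp (-t) ∈ Icc ((1 - t / n) ^ n) ((1 + t / n) ^ n)⁻¹ :=
  ⟨one_sub_div_pow_le_exp_neg htn, exp_neg_le_inv_one_add_div_pow ht n⟩

lemma mul_exp_neg_div_mem_Icc {c A lo hi x : ℝ} (hA : 0 < A) (hc : c ≤ lo) (hx : x ∈ Icc lo hi) :
    (x - c) * exp (-x / A) ∈ Icc ((lo - c) * exp (-hi / A)) ((hi - c) * exp (-lo / A)) := by
  have hexp {y z : ℝ} (h : y ≤ z) : exp (-z / A) ≤ exp (-y / A) :=
    exp_le_exp.mpr (div_le_div_of_nonneg_right (by linarith) hA.le)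
  exact ⟨mul_le_mul (by linarith [hx.1]) (hexp hx.2) (exp_pos _).le (by linarith [hx.1]),
    mul_le_mul (by linarith [hx.2]) (hexp hx.1) (exp_pos _).le (by linarith [hx.1, hx.2])⟩

lemma gdeg_mem_Icc {lo hi x : ℝ} (hlo : 0.02 ≤ lo) (hx : x ∈ Icc lo hi) :
    gdeg x ∈ Icc (1.56 + 13 * ((lo - 0.02) * exp (-hi / 0.18)))
      (1.56 + 13 * ((hi - 0.02) * exp (-lo / 0.18))) := by
  have h := mul_exp_neg_div_mem_Icc (A := 0.18) (by norm_num) hlo hx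
  rw [gdeg, mul_assoc]
  constructor <;> linarith [h.1, h.2]

lemma exp_neg_ten_thirds_mem_Icc : exp (-(10 / 3)) ∈ Icc (0.0341 : ℝ) 0.0373 := by
  have h := exp_neg_mem_Icc_of_le (n := 128) (t := 10 / 3) (by norm_num) (by norm_num)
  exact ⟨le_trans (by norm_num) h.1, h.2.trans (by norm_num)⟩

lemma exp_neg_five_thirds_mem_Icc : exp (-(5 / 3)) ∈ Icc (0.1868 : ℝ) 0.191 := by
  have h := exp_neg_mem_Icc_of_le (n := 128) (t := 5 / 3) (by norm_num) (by norm_num)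
  exact ⟨le_trans (by norm_num) h.1, h.2.trans (by norm_num)⟩

lemma gdeg_point_six_mem_Icc : gdeg 0.6 ∈ Icc 1.817 1.842 := by
  have e := exp_neg_ten_thirds_mem_Icc
  rw [gdeg, show -(0.6 : ℝ) / 0.18 = -(10 / 3) by norm_num]
  constructor <;> linarith [e.1, e.2]

lemma gdeg_point_three_mem_Icc : gdeg 0.3 ∈ Icc 2.239 2.256 := by
  have e := exp_neg_five_thirds_mem_Icc
  rw [gdeg, show -(0.3 : ℝ) / 0.18 = -(5 / 3) by norm_num]
  constructor <;> linarith [e.1, e.2]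

lemma two_point_two_le_gdeg {x : ℝ} (hx : x ∈ Icc 0.158 0.183) : 2.2 ≤ gdeg x := by
  have h := (gdeg_mem_Icc (by norm_num) hx).1
  have e := (exp_neg_mem_Icc_of_le (n := 128) (t := 0.183 / 0.18) (by norm_num) (by norm_num)).1
  rw [neg_div] at h
  norm_num at h e
  linarith

lemma gdeg_le_one_point_nine_nine {x : ℝ} (hx : x ∈ Icc 0.044 0.061) : gdeg x ≤ 1.99 := by
  have h := (gdeg_mem_Icc (by norm_num) hx).2
  have e := (exp_neg_mem_Icc_of_le (n := 128) (t := 0.044 / 0.18) (by norm_num) (by norm_num)).2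
  rw [neg_div] at h
  norm_num at h e
  linarith

/-- The 1D pulse-width map `h` of the chaotic copier is not monotone on the
physically relevant interval: it has a fold. -/
theorem stmt_16 :
    ∃ v₁ v₂ : ℝ, 0.4 < v₁ ∧ v₁ < v₂ ∧ v₂ < 1.2 ∧ hmap v₁ > hmap v₂ := by
  refine ⟨0.7, 1.0, by norm_num, by norm_num, by norm_num, ?_⟩
  have g₁ := gdeg_point_six_mem_Icc
  have g₂ := gdeg_point_three_mem_Icc
  rw [show (0.6 : ℝ) = 1.3 - 0.7 by norm_num] at g₁
  rw [show (0.3 : ℝ) = 1.3 - 1.0 by norm_num] at g₂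
  have hw₁ : 2.2 ≤ gdeg (1.3 + 0.7 - gdeg (1.3 - 0.7)) :=
    two_point_two_le_gdeg ⟨by linarith [g₁.2], by linarith [g₁.1]⟩
  have hw₂ : gdeg (1.3 + 1.0 - gdeg (1.3 - 1.0)) ≤ 1.99 :=
    gdeg_le_one_point_nine_nine ⟨by linarith [g₂.2], by linarith [g₂.1]⟩
  rw [hmap, hmap, gt_iff_lt]
  linarith [g₁.2, g₂.1]
end
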